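/- arXiv:2007.09024 — 2 statements merged into one kernel-verified Lean document; each statement's English description precedes it below -/
import Mathlib

section
/- Let $d\ge 2$, $\lambda>0$, and $v=\frac{1}{\sqrt{d-1}}e_d-\frac{1}{d-1}(e_1+\cdots+e_{d-1})\in\mathbb{R}^d$. For the third-order tensor $\mathscr{E}=\lambda\sum_{i=1}^{d-1} v\otimes e_i\otimes e_i$, the tensor spectral norm satisfies $\|\mathscr{E}\|=\lambda\|v\|$, while the mode-1 matricization satisfies $\|\mathrm{Mat}_1(\mathscr{E})\|\ge \sqrt{d-1}\,\lambda\|v\|$. In particular $\|\mathrm{Mat}_1(\mathscr{E})\|\ge\sqrt{d-1}\,\|\mathscr{E}\|$. -/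
/-!
The tensor is `u ⊗ D` with `u = λ v` and `D` the diagonal projection onto the first `d - 1`
coordinates, so its trilinear form factors as `⟨u, a⟩ ⟨D b, c⟩` and its mode-1 bilinear form as
`⟨u, x⟩ ⟨vec D, y⟩`. Cauchy–Schwarz bounds these by `‖u‖ ‖D‖_op = ‖u‖` and by
`‖u‖ ‖D‖_F = √(d - 1) ‖u‖`, and both bounds are attained.
-/

open Finset Real

/-- Membership in the unit sphere `S^{d-1}`. -/
def UnitVec {d : ℕ} (x : Fin d → ℝ) : Prop := ∑ j, x j ^ 2 = 1

/-- Spectral norm of a third-order tensor. -/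
noncomputable def specNorm3 {d : ℕ} (E : Fin d → Fin d → Fin d → ℝ) : ℝ :=
  sSup { s | ∃ a b c : Fin d → ℝ, UnitVec a ∧ UnitVec b ∧ UnitVec c ∧
    s = ∑ i, ∑ j, ∑ k, E i j k * a i * b j * c k }

/-- Operator norm of the mode-1 matricization of a third-order tensor,
viewed as a `d × d²` matrix via a bilinear-form supremum. -/
noncomputable def mat1Norm {d : ℕ} (E : Fin d → Fin d → Fin d → ℝ) : ℝ :=
  sSup { s | ∃ (x : Fin d → ℝ) (y : Fin d × Fin d → ℝ),
    UnitVec x ∧ (∑ jk, y jk ^ 2 = 1) ∧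
    s = ∑ i, ∑ jk : Fin d × Fin d, E i jk.1 jk.2 * x i * y jk }

lemma abs_sum_mul_le_sqrt_mul_sqrt {ι : Type*} (s : Finset ι) (f g : ι → ℝ) :
    |∑ i ∈ s, f i * g i| ≤ √(∑ i ∈ s, f i ^ 2) * √(∑ i ∈ s, g i ^ 2) := by
  refine abs_le'.2 ⟨Real.sum_mul_le_sqrt_mul_sqrt s f g, ?_⟩
  simpa [← sum_neg_distrib] using Real.sum_mul_le_sqrt_mul_sqrt s (fun i => -f i) g

lemma sum_diag_sq_le_sum_sq {ι : Type*} [Fintype ι] (s : Finset ι) (y : ι × ι → ℝ) :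
    ∑ i ∈ s, y (i, i) ^ 2 ≤ ∑ p, y p ^ 2 := by
  rw [← sum_diag s fun p => y p ^ 2]
  exact sum_le_univ_sum_of_nonneg fun p => sq_nonneg (y p)

section UnitVec

variable {d : ℕ}

lemma unitVec_single (j : Fin d) : UnitVec (Pi.single j 1) := by
  simp [UnitVec, Pi.single_apply]

lemma sqrt_sum_sq_le_one {x : Fin d → ℝ} (hx : UnitVec x) (s : Finset (Fin d)) :
    √(∑ i ∈ s, x i ^ 2) ≤ 1 :=
  Real.sqrt_le_one.2 <| hx ▸ sum_le_univ_sum_of_nonneg fun i => sq_nonneg (x i)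

lemma abs_sum_mul_le_of_unitVec (s : Finset (Fin d)) (f : Fin d → ℝ) {x : Fin d → ℝ}
    (hx : UnitVec x) : |∑ i ∈ s, f i * x i| ≤ √(∑ i ∈ s, f i ^ 2) :=
  (abs_sum_mul_le_sqrt_mul_sqrt s f x).trans <|
    mul_le_of_le_one_right (Real.sqrt_nonneg _) (sqrt_sum_sq_le_one hx s)

lemma exists_unitVec_sum_mul_eq_sqrt (hd : 0 < d) (u : Fin d → ℝ) :
    ∃ a, UnitVec a ∧ ∑ i, u i * a i = √(∑ i, u i ^ 2) := by
  by_cases hu : ∑ i, u i ^ 2 = 0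
  · have hu0 : ∀ i, u i = 0 := fun i =>
      pow_eq_zero_iff two_ne_zero |>.1 <|
        (sum_eq_zero_iff_of_nonneg fun i _ => sq_nonneg (u i)).1 hu i (mem_univ i)
    exact ⟨Pi.single ⟨0, hd⟩ 1, unitVec_single _, by simp [hu0]⟩
  · have hpos : 0 < ∑ i, u i ^ 2 := lt_of_le_of_ne (by positivity) (Ne.symm hu)
    refine ⟨fun i => u i / √(∑ i, u i ^ 2), ?_, ?_⟩
    · simp only [UnitVec, div_pow, ← sum_div, Real.sq_sqrt hpos.le]
      exact div_self hu
    · simp only [← mul_div_assoc, ← sum_div, ← sq]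
      exact Real.div_sqrt

end UnitVec

/-- The tensor `u ⊗ ∑_{j ∈ S} e_j ⊗ e_j`. -/
def diagTensor {d : ℕ} (u : Fin d → ℝ) (S : Finset (Fin d)) : Fin d → Fin d → Fin d → ℝ :=
  fun i j k => u i * if j = k ∧ j ∈ S then 1 else 0

section diagTensor

variable {d : ℕ} (u : Fin d → ℝ) {S : Finset (Fin d)}

lemma sum_diagTensor_mul (a b c : Fin d → ℝ) :
    ∑ i, ∑ j, ∑ k, diagTensor u S i j k * a i * b j * c k
      = (∑ i, u i * a i) * ∑ j ∈ S, b j * c j := by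
  rw [sum_mul_sum]
  simp [diagTensor, ite_and, sum_ite_mem, mul_assoc]

lemma sum_diagTensor_mat1_mul (x : Fin d → ℝ) (y : Fin d × Fin d → ℝ) :
    ∑ i, ∑ jk : Fin d × Fin d, diagTensor u S i jk.1 jk.2 * x i * y jk
      = (∑ i, u i * x i) * ∑ j ∈ S, y (j, j) := by
  rw [sum_mul_sum]
  simp [diagTensor, Fintype.sum_prod_type, ite_and, sum_ite_mem, mul_assoc]

theorem specNorm3_diagTensor (hS : S.Nonempty) :
    specNorm3 (diagTensor u S) = √(∑ i, u i ^ 2) := by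
  obtain ⟨j₀, hj₀⟩ := hS
  refine IsGreatest.csSup_eq ⟨?_, ?_⟩
  · obtain ⟨a, ha, hua⟩ := exists_unitVec_sum_mul_eq_sqrt j₀.pos u
    refine ⟨a, Pi.single j₀ 1, Pi.single j₀ 1, ha, unitVec_single j₀, unitVec_single j₀, ?_⟩
    rw [sum_diagTensor_mul, hua]
    simp [Pi.single_apply, hj₀]
  · rintro s ⟨a, b, c, ha, hb, hc, rfl⟩
    have hbc : |∑ j ∈ S, b j * c j| ≤ 1 :=
      (abs_sum_mul_le_of_unitVec S b hc).trans (sqrt_sum_sq_le_one hb S)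
    rw [sum_diagTensor_mul]
    calc _ ≤ |∑ i, u i * a i| * |∑ j ∈ S, b j * c j| := (le_abs_self _).trans (abs_mul _ _).le
      _ ≤ √(∑ i, u i ^ 2) * 1 := by gcongr; exact abs_sum_mul_le_of_unitVec univ u ha
      _ = _ := mul_one _

theorem mat1Norm_diagTensor (hS : S.Nonempty) :
    mat1Norm (diagTensor u S) = √(#S : ℝ) * √(∑ i, u i ^ 2) := by
  have hcard : (0 : ℝ) < #S := by exact_mod_cast hS.card_pos
  obtain ⟨j₀, -⟩ := hS
  refine IsGreatest.csSup_eq ⟨?_, ?_⟩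
  · obtain ⟨x, hx, hux⟩ := exists_unitVec_sum_mul_eq_sqrt j₀.pos u
    refine ⟨x, fun jk => if jk.1 = jk.2 ∧ jk.1 ∈ S then (√(#S : ℝ))⁻¹ else 0, hx, ?_, ?_⟩
    · simp [Fintype.sum_prod_type, ite_and, sum_ite_mem, hcard.ne']
    · rw [sum_diagTensor_mat1_mul, hux]
      simp [← div_eq_mul_inv, Real.div_sqrt, mul_comm]
  · rintro s ⟨x, y, hx, hy, rfl⟩
    have hdiag : |∑ j ∈ S, y (j, j)| ≤ √(#S : ℝ) := by
      simpa using (abs_sum_mul_le_sqrt_mul_sqrt S (fun _ => 1) fun j => y (j, j)).trans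
        (mul_le_of_le_one_right (Real.sqrt_nonneg _)
          (Real.sqrt_le_one.2 ((sum_diag_sq_le_sum_sq S y).trans hy.le)))
    rw [sum_diagTensor_mat1_mul]
    calc _ ≤ |∑ i, u i * x i| * |∑ j ∈ S, y (j, j)| := (le_abs_self _).trans (abs_mul _ _).le
      _ ≤ √(∑ i, u i ^ 2) * √(#S : ℝ) := by gcongr; exact abs_sum_mul_le_of_unitVec univ u hx
      _ = _ := mul_comm _ _

end diagTensor

theorem stmt3_general (d : ℕ) (hd : 2 ≤ d) (lam : ℝ) (hlam : 0 < lam)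
    (v : Fin d → ℝ)
    (E : Fin d → Fin d → Fin d → ℝ)
    (hE : ∀ i j k, E i j k = lam * v i * (if j = k ∧ (j : ℕ) < d - 1 then 1 else 0)) :
    specNorm3 E = lam * Real.sqrt (∑ i, v i ^ 2) ∧
    Real.sqrt (d - 1) * (lam * Real.sqrt (∑ i, v i ^ 2)) ≤ mat1Norm E ∧
    Real.sqrt (d - 1) * specNorm3 E ≤ mat1Norm E := by
  set S : Finset (Fin d) := {j | (j : ℕ) < d - 1}
  have hS : S.Nonempty := ⟨⟨0, by omega⟩, by simp [S]; omega⟩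
  have hcard : (#S : ℝ) = d - 1 := by
    rw [Fin.card_filter_val_lt, min_eq_right (Nat.sub_le d 1), Nat.cast_sub (by omega), Nat.cast_one]
  have hE' : E = diagTensor (fun i => lam * v i) S := by
    ext i j k
    simp [hE, diagTensor, S]
  have hnorm : √(∑ i, (lam * v i) ^ 2) = lam * √(∑ i, v i ^ 2) := by
    simp_rw [mul_pow, ← Finset.mul_sum]
    rw [Real.sqrt_mul (sq_nonneg _), Real.sqrt_sq hlam.le]
  have hspec : specNorm3 E = lam * √(∑ i, v i ^ 2) := by
    rw [hE', specNorm3_diagTensor _ hS, hnorm]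
  have hmat : mat1Norm E = √(d - 1) * (lam * √(∑ i, v i ^ 2)) := by
    rw [hE', mat1Norm_diagTensor _ hS, hcard, hnorm]
  exact ⟨hspec, hmat.ge, by rw [hspec, hmat]⟩

/-- For `E = λ ∑_{i=1}^{d-1} v ⊗ e_i ⊗ e_i` with
`v = e_d/√(d-1) - (e_1 + ⋯ + e_{d-1})/(d-1)`, the tensor spectral norm is `λ‖v‖`, while the
mode-1 matricization has operator norm at least `√(d-1) λ‖v‖ = √(d-1) ‖E‖`. -/
theorem stmt3 (d : ℕ) (hd : 2 ≤ d) (lam : ℝ) (hlam : 0 < lam)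
    (v : Fin d → ℝ)
    (hv : ∀ i : Fin d, v i = if (i : ℕ) = d - 1 then 1 / Real.sqrt (d - 1)
      else -(1 / (d - 1)))
    (E : Fin d → Fin d → Fin d → ℝ)
    (hE : ∀ i j k, E i j k = lam * v i * (if j = k ∧ (j : ℕ) < d - 1 then 1 else 0)) :
    specNorm3 E = lam * Real.sqrt (∑ i, v i ^ 2) ∧
    Real.sqrt (d - 1) * (lam * Real.sqrt (∑ i, v i ^ 2)) ≤ mat1Norm E ∧
    Real.sqrt (d - 1) * specNorm3 E ≤ mat1Norm E :=
  stmt3_general d hd lam hlam v E hE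
end

section
/- Let $\mathscr{T}=\sum_{k=1}^d\lambda_k u_k^{(1)}\otimes\cdots\otimes u_k^{(p)}$ and $\tilde{\mathscr{T}}=\sum_{k=1}^d\tilde\lambda_k\tilde u_k^{(1)}\otimes\cdots\otimes\tilde u_k^{(p)}$ be odeco with $p\ge 3$ and $\lambda_1\ge\cdots\ge\lambda_d\ge 0$. Then $\lambda_1\le\max_{1\le k\le d}\Big\{\tilde\lambda_k\prod_{q=1}^p|\langle u_1^{(q)},\tilde u_k^{(q)}\rangle|^{(p-2)/p}\Big\}+\|\tilde{\mathscr{T}}-\mathscr{T}\|$. -/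
/-! Pair both tensors with the rank-one tensor `u₁^{(1)} ⊗ ⋯ ⊗ u₁^{(p)}`. By orthonormality `T` gives
`λ₁`, `T̃` gives `∑_k λ̃_k ∏_q c_{kq}` with `c_{kq} = ⟨u₁^{(q)}, ũ_k^{(q)}⟩`, and the two pairings differ by
at most `‖T̃ - T‖`. Writing `|c| = |c|^{(p-2)/p} (c²)^{1/p}`, AM-GM bounds `∏_q (c_{kq}²)^{1/p}` by the
mean of the `c_{kq}²` (this replaces the paper's Hölder step), and Bessel's inequality
`∑_k c_{kq}² ≤ 1` makes these means sum to at most one over `k`. -/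

open Finset Real

/-- Inner product of a `p`-th order tensor with a rank-one tensor. -/
noncomputable def tInner {p d : ℕ} (T : (Fin p → Fin d) → ℝ) (x : Fin p → Fin d → ℝ) : ℝ :=
  ∑ i : Fin p → Fin d, T i * ∏ q, x q (i q)

/-- Tensor spectral norm. -/
noncomputable def specNorm {p d : ℕ} (T : (Fin p → Fin d) → ℝ) : ℝ :=
  sSup { v | ∃ x : Fin p → Fin d → ℝ, (∀ q, UnitVec (x q)) ∧ v = tInner T x }

lemma sum_sq_inner_le_of_orthonormal {d n : ℕ} (A : Fin n → Fin d → ℝ)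
    (hA : ∀ k l, ∑ j, A k j * A l j = if k = l then 1 else 0) (v : Fin d → ℝ) :
    ∑ k, (∑ j, v j * A k j) ^ 2 ≤ ∑ j, v j ^ 2 := by
  have hON : Orthonormal ℝ fun k => WithLp.toLp 2 (A k) := by
    rw [orthonormal_iff_ite]
    intro k l
    simpa [PiLp.inner_apply, mul_comm] using hA k l
  simpa [PiLp.inner_apply, EuclideanSpace.norm_sq_eq, mul_comm] using
    hON.sum_inner_products_le (WithLp.toLp 2 v) (s := univ)

lemma abs_eq_rpow_mul_sq_rpow {p : ℕ} (hp : 0 < p) (a : ℝ) :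
    |a| = |a| ^ (((p : ℝ) - 2) / p) * (a ^ 2) ^ (1 / (p : ℝ)) := by
  have h : ((p : ℝ) - 2) / p + ((2 : ℕ) : ℝ) * (1 / p) = 1 := by field_simp; ring
  rw [← sq_abs, ← rpow_natCast, ← rpow_mul (abs_nonneg a),
    ← rpow_add' (abs_nonneg a) (by rw [h]; exact one_ne_zero), h, rpow_one]

lemma prod_abs_le_prod_rpow_mul_mean_sq {p : ℕ} (hp : 0 < p) (c : Fin p → ℝ) :
    ∏ q, |c q| ≤ (∏ q, |c q| ^ (((p : ℝ) - 2) / p)) * ∑ q, c q ^ 2 / p := by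
  have amgm : ∏ q, (c q ^ 2) ^ (1 / (p : ℝ)) ≤ ∑ q, c q ^ 2 / p := by
    simpa [div_eq_inv_mul] using geom_mean_le_arith_mean_weighted univ (fun _ => 1 / (p : ℝ))
      (fun q => c q ^ 2) (fun _ _ => by positivity) (by simp; field_simp) (fun q _ => sq_nonneg _)
  calc ∏ q, |c q| = (∏ q, |c q| ^ (((p : ℝ) - 2) / p)) * ∏ q, (c q ^ 2) ^ (1 / (p : ℝ)) := by
        rw [← prod_mul_distrib]
        exact prod_congr rfl fun q _ => abs_eq_rpow_mul_sq_rpow hp (c q)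
    _ ≤ _ := by gcongr

lemma sum_mul_prod_le_sup'_of_sum_sq_le_one {ι : Type*} [Fintype ι] {p : ℕ} (hp : 0 < p)
    (hι : (univ : Finset ι).Nonempty) (w : ι → ℝ) (hw : ∀ k, 0 ≤ w k) (c : ι → Fin p → ℝ)
    (hc : ∀ q, ∑ k, c k q ^ 2 ≤ 1) :
    ∑ k, w k * ∏ q, c k q ≤ univ.sup' hι fun k => w k * ∏ q, |c k q| ^ (((p : ℝ) - 2) / p) := by
  set M := univ.sup' hι fun k => w k * ∏ q, |c k q| ^ (((p : ℝ) - 2) / p)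
  have hle_M : ∀ k, w k * ∏ q, |c k q| ^ (((p : ℝ) - 2) / p) ≤ M := fun k =>
    le_sup' (fun k => w k * ∏ q, |c k q| ^ (((p : ℝ) - 2) / p)) (mem_univ k)
  have hM : 0 ≤ M := by
    have ⟨k, _⟩ := hι
    exact (mul_nonneg (hw k) (prod_nonneg fun q _ => by positivity)).trans (hle_M k)
  have hterm : ∀ k, w k * ∏ q, c k q ≤ M * ∑ q, c k q ^ 2 / p := fun k =>
    calc w k * ∏ q, c k q ≤ w k * ∏ q, |c k q| :=
          mul_le_mul_of_nonneg_left ((le_abs_self _).trans (abs_prod _ _).le) (hw k)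
      _ ≤ w k * ((∏ q, |c k q| ^ (((p : ℝ) - 2) / p)) * ∑ q, c k q ^ 2 / p) :=
          mul_le_mul_of_nonneg_left (prod_abs_le_prod_rpow_mul_mean_sq hp (c k)) (hw k)
      _ ≤ M * ∑ q, c k q ^ 2 / p := by
          rw [← mul_assoc]
          gcongr
          exact hle_M k
  calc ∑ k, w k * ∏ q, c k q ≤ ∑ k, M * ∑ q, c k q ^ 2 / p := sum_le_sum fun k _ => hterm k
    _ = M * ∑ q, (∑ k, c k q ^ 2) / p := by rw [← mul_sum, sum_comm]; simp only [sum_div]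
    _ ≤ M * ∑ _q : Fin p, 1 / (p : ℝ) := by gcongr with q; exact hc q
    _ = M := by simp; field_simp

section Tensor

variable {p d : ℕ}

lemma tInner_sub (S S' : (Fin p → Fin d) → ℝ) (x : Fin p → Fin d → ℝ) :
    tInner (fun i => S i - S' i) x = tInner S x - tInner S' x := by
  simp only [tInner, sub_mul, sum_sub_distrib]

lemma tInner_eq_sum_mul_prod_inner {n : ℕ} (lam : Fin n → ℝ) (u : Fin p → Fin n → Fin d → ℝ)
    (T : (Fin p → Fin d) → ℝ) (hT : ∀ i, T i = ∑ k, lam k * ∏ q, u q k (i q))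
    (x : Fin p → Fin d → ℝ) :
    tInner T x = ∑ k, lam k * ∏ q, ∑ j, u q k j * x q j := by
  simp_rw [tInner, hT, sum_mul, mul_assoc, ← prod_mul_distrib]
  rw [sum_comm]
  simp_rw [← mul_sum, Fintype.prod_sum]

lemma tInner_eq_of_orthonormal (hp : 0 < p) {n : ℕ} (lam : Fin n → ℝ)
    (u : Fin p → Fin n → Fin d → ℝ) (hu : ∀ q k l, ∑ j, u q k j * u q l j = if k = l then 1 else 0)
    (T : (Fin p → Fin d) → ℝ) (hT : ∀ i, T i = ∑ k, lam k * ∏ q, u q k (i q)) (l : Fin n) :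
    tInner T (fun q => u q l) = lam l := by
  simp [tInner_eq_sum_mul_prod_inner lam u T hT, hu, hp.ne']

lemma abs_le_one_of_unitVec {x : Fin d → ℝ} (hx : UnitVec x) (j : Fin d) : |x j| ≤ 1 := by
  rw [← sq_le_one_iff_abs_le_one, ← hx]
  exact single_le_sum (f := fun j => x j ^ 2) (fun j _ => sq_nonneg _) (mem_univ j)

lemma abs_tInner_le_sum_abs (S : (Fin p → Fin d) → ℝ) {x : Fin p → Fin d → ℝ}
    (hx : ∀ q, UnitVec (x q)) : |tInner S x| ≤ ∑ i, |S i| := by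
  refine (abs_sum_le_sum_abs _ _).trans (sum_le_sum fun i _ => ?_)
  rw [abs_mul, abs_prod]
  exact mul_le_of_le_one_right (abs_nonneg _)
    (prod_le_one (fun q _ => abs_nonneg _) fun q _ => abs_le_one_of_unitVec (hx q) (i q))

lemma tInner_le_specNorm (S : (Fin p → Fin d) → ℝ) {x : Fin p → Fin d → ℝ}
    (hx : ∀ q, UnitVec (x q)) : tInner S x ≤ specNorm S := by
  refine le_csSup ⟨∑ i, |S i|, ?_⟩ ⟨x, hx, rfl⟩
  rintro v ⟨y, hy, rfl⟩
  exact (le_abs_self _).trans (abs_tInner_le_sum_abs S hy)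

lemma tInner_update_neg (S : (Fin p → Fin d) → ℝ) (x : Fin p → Fin d → ℝ) (e : Fin p) :
    tInner S (Function.update x e (-x e)) = -tInner S x := by
  rw [tInner, tInner, ← sum_neg_distrib]
  refine sum_congr rfl fun i _ => ?_
  rw [Fintype.prod_eq_mul_prod_compl e, Fintype.prod_eq_mul_prod_compl e (fun q => x q (i q)),
    prod_congr rfl fun q hq => by rw [Function.update_of_ne (by simpa using hq)],
    Function.update_self, Pi.neg_apply]
  ring

lemma neg_tInner_le_specNorm (hp : 0 < p) (S : (Fin p → Fin d) → ℝ) {x : Fin p → Fin d → ℝ}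
    (hx : ∀ q, UnitVec (x q)) : -tInner S x ≤ specNorm S := by
  set e : Fin p := ⟨0, hp⟩
  rw [← tInner_update_neg S x e]
  refine tInner_le_specNorm S fun q => ?_
  rcases eq_or_ne q e with rfl | hq
  · simpa [UnitVec] using hx e
  · simpa [Function.update_of_ne hq] using hx q

end Tensor

theorem stmt14_general (p d : ℕ) (hp : 3 ≤ p) (hd : 0 < d)
    (lam tlam : Fin d → ℝ)
    (htlam : ∀ k, 0 ≤ tlam k)
    (u tu : Fin p → Fin d → Fin d → ℝ)
    (hu : ∀ q k l, (∑ j, u q k j * u q l j) = if k = l then 1 else 0)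
    (htu : ∀ q k l, (∑ j, tu q k j * tu q l j) = if k = l then 1 else 0)
    (T tT : (Fin p → Fin d) → ℝ)
    (hT : ∀ i, T i = ∑ k, lam k * ∏ q, u q k (i q))
    (htT : ∀ i, tT i = ∑ k, tlam k * ∏ q, tu q k (i q)) :
    lam ⟨0, hd⟩ ≤
      Finset.univ.sup' ⟨⟨0, hd⟩, Finset.mem_univ _⟩
        (fun k => tlam k * ∏ q, |∑ j, u q ⟨0, hd⟩ j * tu q k j| ^ (((p : ℝ) - 2) / (p : ℝ)))
      + specNorm (fun i => tT i - T i) := by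
  have hp0 : 0 < p := by omega
  set x : Fin p → Fin d → ℝ := fun q => u q ⟨0, hd⟩
  have hx : ∀ q, UnitVec (x q) := fun q => by simpa [UnitVec, sq] using hu q ⟨0, hd⟩ ⟨0, hd⟩
  have hTx : tInner T x = lam ⟨0, hd⟩ := tInner_eq_of_orthonormal hp0 lam u hu T hT _
  have htTx : tInner tT x = ∑ k, tlam k * ∏ q, ∑ j, u q ⟨0, hd⟩ j * tu q k j := by
    simp_rw [tInner_eq_sum_mul_prod_inner tlam tu tT htT, x, mul_comm (tu _ _ _)]
  have hBessel : ∀ q, ∑ k, (∑ j, u q ⟨0, hd⟩ j * tu q k j) ^ 2 ≤ 1 := fun q =>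
    (sum_sq_inner_le_of_orthonormal (tu q) (htu q) (u q ⟨0, hd⟩)).trans_eq (hx q)
  calc lam ⟨0, hd⟩ = tInner tT x + -tInner (fun i => tT i - T i) x := by
        rw [tInner_sub, hTx]; ring
    _ ≤ _ := add_le_add
        (htTx ▸ sum_mul_prod_le_sup'_of_sum_sq_le_one hp0 _ tlam htlam _ hBessel)
        (neg_tInner_le_specNorm hp0 _ hx)

/-- For odeco tensors `T = ∑_k λ_k u_k^{(1)} ⊗ ⋯ ⊗ u_k^{(p)}` and
`T̃ = ∑_k λ̃_k ũ_k^{(1)} ⊗ ⋯ ⊗ ũ_k^{(p)}` with `p ≥ 3` and `λ₁ ≥ ⋯ ≥ λ_d ≥ 0`: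
`λ₁ ≤ max_k { λ̃_k ∏_q |⟨u₁^{(q)}, ũ_k^{(q)}⟩|^{(p-2)/p} } + ‖T̃ - T‖`. -/
theorem stmt14 (p d : ℕ) (hp : 3 ≤ p) (hd : 0 < d)
    (lam tlam : Fin d → ℝ)
    (hlam : ∀ k, 0 ≤ lam k) (htlam : ∀ k, 0 ≤ tlam k)
    (hmono : ∀ k l : Fin d, k ≤ l → lam l ≤ lam k)
    (u tu : Fin p → Fin d → Fin d → ℝ)
    (hu : ∀ q k l, (∑ j, u q k j * u q l j) = if k = l then 1 else 0)
    (htu : ∀ q k l, (∑ j, tu q k j * tu q l j) = if k = l then 1 else 0)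
    (T tT : (Fin p → Fin d) → ℝ)
    (hT : ∀ i, T i = ∑ k, lam k * ∏ q, u q k (i q))
    (htT : ∀ i, tT i = ∑ k, tlam k * ∏ q, tu q k (i q)) :
    lam ⟨0, hd⟩ ≤
      Finset.univ.sup' ⟨⟨0, hd⟩, Finset.mem_univ _⟩
        (fun k => tlam k * ∏ q, |∑ j, u q ⟨0, hd⟩ j * tu q k j| ^ (((p : ℝ) - 2) / (p : ℝ)))
      + specNorm (fun i => tT i - T i) :=
  stmt14_general p d hp hd lam tlam htlam u tu hu htu T tT hT htT
end
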